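/- arXiv:1203.2888 — 3 statements merged into one kernel-verified Lean document; each statement's English description precedes it below -/
import Mathlib

section
/- The permanent of any doubly stochastic n × n matrix is strictly positive. -/
open Finset

/-- The permanent of any doubly stochastic `n × n` real matrix is strictly positive. -/
theorem permanent_doubly_stochastic_pos (n : ℕ) (M : Matrix (Fin n) (Fin n) ℝ)
    (hnonneg : ∀ i j, 0 ≤ M i j)
    (hrow : ∀ i, ∑ j, M i j = 1)
    (hcol : ∀ j, ∑ i, M i j = 1) :
    0 < ∑ σ : Equiv.Perm (Fin n), ∏ i, M i (σ i) := by
  have hM : M ∈ doublyStochastic ℝ (Fin n) :=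
    mem_doublyStochastic_iff_sum.2 ⟨hnonneg, hrow, hcol⟩
  obtain ⟨w, hw0, hw1, hwM⟩ := exists_eq_sum_perm_of_mem_doublyStochastic hM
  obtain ⟨σ, hσ⟩ : ∃ σ, 0 < w σ := by
    by_contra h
    push_neg at h
    have : ∑ σ : Equiv.Perm (Fin n), w σ = 0 :=
      Finset.sum_eq_zero fun σ _ => le_antisymm (h σ) (hw0 σ)
    simp [this] at hw1
  have key : ∀ i, w σ ≤ M i (σ i) := by
    intro i
    have hMe : M i (σ i) = ∑ τ : Equiv.Perm (Fin n), w τ * (τ.permMatrix ℝ) i (σ i) := by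
      rw [← hwM]; simp [Matrix.sum_apply]
    rw [hMe]
    have h1 : w σ = w σ * (σ.permMatrix ℝ) i (σ i) := by
      simp [Equiv.Perm.permMatrix, PEquiv.toMatrix_apply, Equiv.toPEquiv_apply]
    rw [h1]
    refine Finset.single_le_sum (f := fun τ => w τ * (τ.permMatrix ℝ) i (σ i))
      (fun τ _ => mul_nonneg (hw0 τ) ?_) (mem_univ σ)
    simp only [Equiv.Perm.permMatrix, PEquiv.toMatrix_apply, Equiv.toPEquiv_apply]
    positivity
  apply Finset.sum_pos' (fun τ _ => Finset.prod_nonneg fun i _ => hnonneg _ _)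
  exact ⟨σ, mem_univ σ, Finset.prod_pos fun i _ => lt_of_lt_of_le hσ (key i)⟩
end

section
/- A nonzero univariate real polynomial with at most k monomials (k ≥ 1) has at most k − 1 strictly positive real roots, counted without multiplicity. -/
open Polynomial

/-- Rolle step for positive roots. -/
lemma pos_roots_le_derivative (q : Polynomial ℝ) (hq : q ≠ 0) (hq' : derivative q ≠ 0) :
    (q.roots.toFinset.filter (fun x => 0 < x)).card ≤
      ((derivative q).roots.toFinset.filter (fun x => 0 < x)).card + 1 := by
  refine le_trans (Finset.card_le_diff_of_interleaved ?_)
    (add_le_add_left (Finset.card_mono Finset.sdiff_subset) _)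
  intro x hx y hy hxy _
  simp only [Finset.mem_filter, Multiset.mem_toFinset, mem_roots hq] at hx hy
  obtain ⟨z, hz1, hz2⟩ := exists_deriv_eq_zero hxy q.continuousOn (hx.1.trans hy.1.symm)
  refine ⟨z, ?_, hz1.1, hz1.2⟩
  simp only [Finset.mem_filter, Multiset.mem_toFinset, mem_roots hq']
  exact ⟨by rwa [IsRoot, ← q.deriv], lt_trans hx.2 hz1.1⟩

/-- Descartes-type bound: a nonzero univariate real polynomial with at most `k`
monomials (`k ≥ 1`) has at most `k − 1` strictly positive real roots, counted
without multiplicity. -/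
theorem fewnomial_positive_roots (k : ℕ) (hk : 1 ≤ k) (p : Polynomial ℝ)
    (hp : p ≠ 0) (hsupp : p.support.card ≤ k) :
    (p.roots.toFinset.filter (fun x => 0 < x)).card ≤ k - 1 := by
  induction k using Nat.strong_induction_on generalizing p with
  | _ k ih =>
  -- factor out the trailing power of X
  set n := p.natTrailingDegree with hn
  have hdvd : X ^ n ∣ p := by
    rw [X_pow_dvd_iff]
    intro d hd
    exact coeff_eq_zero_of_lt_natTrailingDegree hd
  obtain ⟨q, hq⟩ := hdvd
  have hqne : q ≠ 0 := by rintro rfl; simp at hq; exact hp hq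
  have hq0 : q.coeff 0 ≠ 0 := by
    have h1 : p.coeff n ≠ 0 := by
      rw [hn]
      exact trailingCoeff_nonzero_iff_nonzero.mpr hp
    have h2 : p.coeff n = q.coeff 0 := by
      rw [hq]
      simpa using coeff_X_pow_mul q n 0
    rwa [h2] at h1
  -- support of q injects into support of p
  have hsuppq : q.support.card ≤ k := by
    refine le_trans (le_trans ?_ (le_refl p.support.card)) hsupp
    have : q.support.card = (q.support.image (· + n)).card := by
      rw [Finset.card_image_of_injective _ (add_left_injective n)]
    rw [this]
    apply Finset.card_le_card
    intro a ha
    simp only [Finset.mem_image] at ha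
    obtain ⟨b, hb, hba⟩ := ha
    rw [mem_support_iff, hq, ← hba, coeff_X_pow_mul]
    exact mem_support_iff.mp hb
  -- positive roots of p are positive roots of q
  have hroots : (p.roots.toFinset.filter (fun x => 0 < x)) ⊆
      (q.roots.toFinset.filter (fun x => 0 < x)) := by
    intro x hx
    simp only [Finset.mem_filter, Multiset.mem_toFinset, mem_roots', IsRoot] at hx ⊢
    obtain ⟨⟨-, hxr⟩, hxpos⟩ := hx
    refine ⟨⟨hqne, ?_⟩, hxpos⟩
    rw [hq, eval_mul, eval_pow, eval_X, mul_eq_zero] at hxr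
    rcases hxr with h | h
    · exact absurd h (pow_ne_zero _ (ne_of_gt hxpos))
    · exact h
  refine le_trans (Finset.card_le_card hroots) ?_
  -- now handle q, whose constant coefficient is nonzero
  rcases eq_or_ne (derivative q) 0 with hq' | hq'
  · -- q is constant, no roots
    rw [eq_C_of_derivative_eq_zero hq', roots_C]
    simp
  · -- derivative has at most k-1 monomials
    have h0mem : (0 : ℕ) ∈ q.support := mem_support_iff.mpr hq0
    have hsuppd : (derivative q).support.card ≤ k - 1 := by
      have hsub : (derivative q).support ⊆ (q.support.erase 0).image (· - 1) := by
        intro m hm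
        rw [mem_support_iff, coeff_derivative] at hm
        have hm1 : q.coeff (m + 1) ≠ 0 := fun h => hm (by simp [h])
        simp only [Finset.mem_image, Finset.mem_erase]
        exact ⟨m + 1, ⟨Nat.succ_ne_zero m, mem_support_iff.mpr hm1⟩, rfl⟩
      calc (derivative q).support.card ≤ ((q.support.erase 0).image (· - 1)).card :=
            Finset.card_le_card hsub
        _ ≤ (q.support.erase 0).card := Finset.card_image_le
        _ = q.support.card - 1 := Finset.card_erase_of_mem h0mem
        _ ≤ k - 1 := Nat.sub_le_sub_right hsuppq 1
    have hk2 : 2 ≤ k := by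
      by_contra h
      have hk1 : q.support.card ≤ 1 := by omega
      have hs : q.support = {0} := by
        apply Finset.eq_singleton_iff_unique_mem.mpr
        exact ⟨h0mem, fun y hy => Finset.card_le_one.mp hk1 y hy 0 h0mem⟩
      have hqc : q = C (q.coeff 0) := by
        ext m
        rcases eq_or_ne m 0 with rfl | hm
        · simp
        · rw [coeff_C, if_neg hm]
          by_contra hc
          have := mem_support_iff.mpr hc
          rw [hs, Finset.mem_singleton] at this
          exact hm this
      exact hq' (by rw [hqc]; simp)
    have ihd := ih (k - 1) (by omega) (by omega) (derivative q) hq' hsuppd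
    calc (q.roots.toFinset.filter (fun x => 0 < x)).card
        ≤ ((derivative q).roots.toFinset.filter (fun x => 0 < x)).card + 1 :=
          pos_roots_le_derivative q hqne hq'
      _ ≤ (k - 1 - 1) + 1 := add_le_add_left ihd 1
      _ ≤ k - 1 := by omega
end

section
/- Weak modular representation lower bound for AND: for any prime p and any subset A ⊆ 𝔽_p, if a multilinear polynomial P ∈ 𝔽_p[x₁,…,x_n] satisfies (for all x ∈ {0,1}ⁿ) AND(x) = 1 ⟺ P(x) ∈ A, then deg P ≥ n/(p−1). -/
open MvPolynomial

/-- Weak modular representation lower bound for AND: for a prime `p` and a set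
`A ⊆ 𝔽_p`, if a multilinear polynomial `P ∈ 𝔽_p[x₁,…,x_n]` satisfies, for all
`x ∈ {0,1}ⁿ`, `AND(x) = 1 ⟺ P(x) ∈ A`, then `deg P ≥ n/(p−1)`. -/
theorem weak_representation_and_lower_bound (p n : ℕ) [Fact p.Prime]
    (A : Set (ZMod p)) (P : MvPolynomial (Fin n) (ZMod p))
    (hml : ∀ i, P.degreeOf i ≤ 1)
    (hrep : ∀ x : Fin n → ZMod p, (∀ i, x i = 0 ∨ x i = 1) →
      ((∀ i, x i = 1) ↔ eval x P ∈ A)) :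
    n ≤ (p - 1) * P.totalDegree := by
  classical
  by_contra hlt
  push_neg at hlt
  have hp : p.Prime := Fact.out
  -- interpolating polynomial for the indicator of A
  set g : ZMod p → ZMod p := fun a => if a ∈ A then 1 else 0 with hg
  set f : Polynomial (ZMod p) := Lagrange.interpolate Finset.univ id g with hf
  have hinj : Set.InjOn id ((Finset.univ : Finset (ZMod p)) : Set (ZMod p)) := fun a _ b _ h => h
  have hfeval : ∀ a : ZMod p, f.eval a = g a := by
    intro a
    exact Lagrange.eval_interpolate_at_node g hinj (Finset.mem_univ a)
  have hfdeg : f.natDegree ≤ p - 1 := by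
    have h1 : f.degree < (p : ℕ) := by
      have h0 := Lagrange.degree_interpolate_lt g hinj
      rw [Finset.card_univ, ZMod.card] at h0
      exact h0
    rcases eq_or_ne f 0 with h | h
    · simp [h]
    · have := (Polynomial.natDegree_lt_iff_degree_lt h).mpr h1
      omega
  -- the composed polynomial
  set Q : MvPolynomial (Fin n) (ZMod p) := Polynomial.eval₂ MvPolynomial.C P f with hQ
  have hQeval : ∀ x : Fin n → ZMod p, eval x Q = f.eval (eval x P) := by
    intro x
    have := Polynomial.hom_eval₂ f MvPolynomial.C (eval x : MvPolynomial (Fin n) (ZMod p) →+* ZMod p) P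
    rw [hQ, this]
    rw [show ((eval x : MvPolynomial (Fin n) (ZMod p) →+* ZMod p).comp MvPolynomial.C) = RingHom.id (ZMod p) by ext a; simp]
    rfl
  have hQdeg : Q.totalDegree < n := by
    have : Q.totalDegree ≤ f.natDegree * P.totalDegree := by
      rw [hQ, Polynomial.eval₂_eq_sum, Polynomial.sum]
      refine (totalDegree_finset_sum _ _).trans ?_
      refine Finset.sup_le fun e he => ?_
      refine (totalDegree_mul _ _).trans ?_
      have h1 : (MvPolynomial.C (f.coeff e) : MvPolynomial (Fin n) (ZMod p)).totalDegree = 0 := totalDegree_C _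
      have h2 : (P ^ e).totalDegree ≤ e * P.totalDegree := totalDegree_pow _ _
      have h3 : e ≤ f.natDegree := Polynomial.le_natDegree_of_mem_supp e he
      calc _ ≤ 0 + e * P.totalDegree := add_le_add (le_of_eq h1) h2
        _ ≤ f.natDegree * P.totalDegree := by simpa using Nat.mul_le_mul_right _ h3
    calc Q.totalDegree ≤ f.natDegree * P.totalDegree := this
      _ ≤ (p - 1) * P.totalDegree := Nat.mul_le_mul_right _ hfdeg
      _ < n := hlt
  -- the cube
  set cube : Finset (Fin n → ZMod p) :=
    Fintype.piFinset (fun _ => ({0, 1} : Finset (ZMod p))) with hcube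
  set w : (Fin n → ZMod p) → ZMod p := fun x => ∏ i, (2 * x i - 1) with hw
  -- the sum is zero since deg Q < n
  have hzero : ∑ x ∈ cube, w x * eval x Q = 0 := by
    have : ∀ x, w x * eval x Q
        = ∑ d ∈ Q.support, Q.coeff d * ∏ i, ((2 * x i - 1) * x i ^ d i) := by
      intro x
      rw [eval_eq' x Q, Finset.mul_sum]
      refine Finset.sum_congr rfl fun d _ => ?_
      rw [Finset.prod_mul_distrib, hw]
      ring
    rw [Finset.sum_congr rfl fun x _ => this x, Finset.sum_comm]
    refine Finset.sum_eq_zero fun d hd => ?_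
    rw [← Finset.mul_sum, ← Finset.prod_univ_sum (fun _ => ({0,1} : Finset (ZMod p)))
      (fun i a => (2 * a - 1) * a ^ d i)]
    -- some coordinate of d is zero
    have hdn : ∃ i, d i = 0 := by
      by_contra hall
      push_neg at hall
      have h1 : ∀ i ∈ Finset.univ, 1 ≤ d i := fun i _ => Nat.one_le_iff_ne_zero.mpr (hall i)
      have h2 : n ≤ ∑ i, d i := by
        calc n = ∑ _i : Fin n, 1 := by simp
          _ ≤ ∑ i, d i := Finset.sum_le_sum h1
      have h3 : ∑ i, d i ≤ Q.totalDegree := by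
        calc ∑ i, d i = d.sum fun _ e => e := by
              rw [Finsupp.sum]; exact (Finset.sum_subset (Finset.subset_univ _) (fun i _ hi => Finsupp.notMem_support_iff.mp hi)).symm
          _ ≤ Q.totalDegree := MvPolynomial.le_totalDegree hd
      omega
    obtain ⟨i, hi⟩ := hdn
    rw [Finset.prod_eq_zero (Finset.mem_univ i)]
    · exact mul_zero _
    · have h01 : (0 : ZMod p) ∉ ({1} : Finset (ZMod p)) := by
        simp [zero_ne_one]
      rw [show ({0,1} : Finset (ZMod p)) = insert 0 {1} from rfl, Finset.sum_insert h01]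
      simp [hi]
      ring
  -- the sum equals 1 by the representation hypothesis
  have hone : ∑ x ∈ cube, w x * eval x Q = 1 := by
    have hval : ∀ x ∈ cube, w x * eval x Q = if (∀ i, x i = 1) then w x else 0 := by
      intro x hx
      have hx01 : ∀ i, x i = 0 ∨ x i = 1 := by
        intro i
        have := Fintype.mem_piFinset.mp hx i
        simpa using this
      rw [hQeval, hfeval]
      show w x * (if eval x P ∈ A then 1 else 0) = _
      by_cases h : ∀ i, x i = 1
      · rw [if_pos ((hrep x hx01).mp h), if_pos h, mul_one]
      · rw [if_neg (fun hm => h ((hrep x hx01).mpr hm)), if_neg h, mul_zero]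
    rw [Finset.sum_congr rfl hval]
    have hmem : (fun _ => (1 : ZMod p)) ∈ cube := by
      rw [hcube, Fintype.mem_piFinset]; intro i; simp
    rw [Finset.sum_eq_single_of_mem (fun _ => (1 : ZMod p)) hmem ?other]
    · rw [if_pos (fun i => rfl)]
      simp [hw]
      norm_num
    case other =>
      intro b _ hb
      rw [if_neg]
      intro hall
      exact hb (funext hall)
  rw [hzero] at hone
  exact zero_ne_one hone
end
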